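/- arXiv:1803.10898 — 2 statements merged into one kernel-verified Lean document; each statement's English description precedes it below -/
import Mathlib

section
/- Under the same setup, for any ε > 0 define κ̄(ε) := min{ ε/(2C̄), (ε/(2ρ̄d))², ε/ρ₀, 1 }. Then sup_{Λ∈V} { ∫_Ξ G dΛ − κ̄(ε)·B(Λ, Λ_u) } ≥ sup_{Λ∈V} ∫_Ξ G dΛ − ε. -/
open MeasureTheory Set
open scoped Classical

noncomputable section

/-- Kullback–Leibler divergence `D(φ,ϕ)` of measures on `Ξ`: equal to
`∫_Ξ log(dφ/dϕ) dφ` when `φ ≪ ϕ` and the log-density is `φ`-integrable on `Ξ`,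
and `+∞` otherwise. -/
def KLdiv {E : Type*} [MeasurableSpace E] (Ξ : Set E) (φ ϕ : Measure E) : EReal :=
  if φ ≪ ϕ ∧ IntegrableOn (fun ξ => Real.log (φ.rnDeriv ϕ ξ).toReal) Ξ φ
  then ((∫ ξ in Ξ, Real.log (φ.rnDeriv ϕ ξ).toReal ∂φ : ℝ) : EReal)
  else ⊤

/-- The prox function `B(Λ,Γ)` for nonnegative measures on `Ξ`:
`∫_Ξ log(dΛ/dΓ) dΛ − (Λ(Ξ) − Γ(Ξ))` when `Λ ≪ Γ` and `∫_Ξ |log(dΛ/dΓ)| dΛ < ∞`,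
and `+∞` otherwise. -/
def Bprox {E : Type*} [MeasurableSpace E] (Ξ : Set E) (Λ Γ : Measure E) : EReal :=
  if Λ ≪ Γ ∧ IntegrableOn (fun ξ => Real.log (Λ.rnDeriv Γ ξ).toReal) Ξ Λ
  then (((∫ ξ in Ξ, Real.log (Λ.rnDeriv Γ ξ).toReal ∂Λ) - ((Λ Ξ).toReal - (Γ Ξ).toReal) : ℝ) : EReal)
  else ⊤

/-- `H(ρ, ρ') = ρ log(ρ/ρ') − ρ + ρ'` (with `0 log 0 = 0`, automatic since
`Real.log 0 = 0`). -/
def Hfun (ρ ρ' : ℝ) : ℝ := ρ * Real.log (ρ / ρ') - ρ + ρ'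

/-!
Let `G` attain its maximum `M` on `Ξ` at `ξs`. Every `Λ ∈ V` has `∫_Ξ G dΛ ≤ max 0 (ρ̄ M)`, so it
suffices to exhibit one `Λ ∈ V` whose regularized value is at least `max 0 (ρ̄ M) - ε`.
If `M ≤ 0`, the zero measure does, since `B(0, Λ_u) = ρ₀` and `κ̄ ρ₀ ≤ ε`. Otherwise spread the
mass `ρ̄` uniformly over the ball of radius `κ̄ R` obtained by shrinking `B_R(ξ̃)` towards `ξs` by
the factor `κ̄`. It lies in `Ξ` by convexity, `G ≥ M - L κ̄ (R + D_Ξ)` on it by the Lipschitz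
bound, and its prox value is `H(ρ̄, ρ₀) - ρ̄ log r - ρ̄ d log κ̄`, so the loss is at most
`κ̄ C̄ + ρ̄ d (-κ̄ log κ̄) ≤ κ̄ C̄ + ρ̄ d √κ̄ ≤ ε`. In dimension `0` the formula gives `κ̄ ≤ 0`, and
the uniform measure of mass `ρ̄` on `Ξ` works.
-/

open Metric Module InformationTheory

lemma Real.negMulLog_le_sqrt {x : ℝ} (hx : 0 ≤ x) : Real.negMulLog x ≤ √x := by
  rcases hx.eq_or_lt with rfl | hx
  · simp
  -- `log y ≤ y / 2`, from `log (y / 2) ≤ y / 2 - 1` and `log 2 < 1`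
  have hlog : Real.log (√x)⁻¹ ≤ (√x)⁻¹ / 2 := by
    have h := Real.log_le_sub_one_of_pos (by positivity : 0 < (√x)⁻¹ / 2)
    rw [Real.log_div (by positivity) two_ne_zero] at h
    linarith [Real.log_two_lt_d9]
  calc Real.negMulLog x = 2 * x * Real.log (√x)⁻¹ := by
        rw [Real.negMulLog, Real.log_inv, Real.log_sqrt hx.le]; ring
    _ ≤ 2 * x * ((√x)⁻¹ / 2) := by gcongr
    _ = √x := by
        field_simp
        rw [Real.sq_sqrt hx.le]

lemma Hfun_eq_mul_klFun (ρ : ℝ) {ρ' : ℝ} (hρ' : ρ' ≠ 0) : Hfun ρ ρ' = ρ' * klFun (ρ / ρ') := by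
  rw [Hfun, klFun_apply]
  field_simp
  ring

lemma Hfun_nonneg {ρ ρ' : ℝ} (hρ : 0 ≤ ρ) (hρ' : 0 < ρ') : 0 ≤ Hfun ρ ρ' := by
  rw [Hfun_eq_mul_klFun ρ hρ'.ne']
  exact mul_nonneg hρ'.le (klFun_nonneg (by positivity))

@[simp]
lemma Hfun_zero_left (ρ' : ℝ) : Hfun 0 ρ' = ρ' := by
  simp [Hfun]

lemma bddAbove_image_Hfun {ρ' : ℝ} (hρ' : ρ' ≠ 0) (a b : ℝ) :
    BddAbove ((fun ρ => Hfun ρ ρ') '' Icc a b) := by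
  simp_rw [Hfun_eq_mul_klFun _ hρ']
  exact isCompact_Icc.bddAbove_image (by fun_prop)

lemma le_sSup_image_Hfun {ρ ρ' a b : ℝ} (hρ' : ρ' ≠ 0) (hρ : ρ ∈ Icc a b) :
    Hfun ρ ρ' ≤ sSup ((fun ρ => Hfun ρ ρ') '' Icc a b) :=
  le_csSup (bddAbove_image_Hfun hρ' a b) (mem_image_of_mem _ hρ)

/-- The measure of total mass `m` spread uniformly (with respect to `μ`) over `S`; it is the zero
measure when `μ S` is `0` or `∞`. -/
def uniformOfMass {E : Type*} [MeasurableSpace E] (μ : Measure E) (S : Set E) (m : ℝ) :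
    Measure E :=
  ENNReal.ofReal (m / (μ S).toReal) • μ.restrict S

section UniformOfMass

variable {E : Type*} [MeasurableSpace E] {μ : Measure E} {S Ξ : Set E} {m : ℝ}

instance : IsFiniteMeasure (uniformOfMass μ S m) := by
  refine ⟨?_⟩
  rw [uniformOfMass, Measure.smul_apply, Measure.restrict_apply_univ, smul_eq_mul]
  rcases eq_or_ne (μ S) ⊤ with h | h
  · simp [h]
  · exact ENNReal.mul_lt_top ENNReal.ofReal_lt_top h.lt_top

lemma uniformOfMass_apply_of_subset (hS0 : μ S ≠ 0) (hSfin : μ S ≠ ⊤) {T : Set E}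
    (hST : S ⊆ T) : uniformOfMass μ S m T = ENNReal.ofReal m := by
  have hvS : 0 < (μ S).toReal := ENNReal.toReal_pos hS0 hSfin
  rw [uniformOfMass, Measure.smul_apply, Measure.restrict_apply_superset hST, smul_eq_mul,
    ENNReal.ofReal_div_of_pos hvS, ENNReal.ofReal_toReal hSfin,
    ENNReal.div_mul_cancel hS0 hSfin]

lemma ae_mem_uniformOfMass (hS : MeasurableSet S) : ∀ᵐ ξ ∂uniformOfMass μ S m, ξ ∈ S :=
  Measure.ae_smul_measure (ae_restrict_mem hS) _

lemma uniformOfMass_compl (hS : MeasurableSet S) (hSΞ : S ⊆ Ξ) : uniformOfMass μ S m Ξᶜ = 0 :=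
  measure_mono_null (compl_subset_compl.2 hSΞ) (ae_mem_uniformOfMass hS)

lemma restrict_uniformOfMass (hS : MeasurableSet S) (hSΞ : S ⊆ Ξ) :
    (uniformOfMass μ S m).restrict Ξ = uniformOfMass μ S m := by
  rw [uniformOfMass, Measure.restrict_smul, Measure.restrict_restrict' hS,
    inter_eq_right.2 hSΞ]

lemma setIntegral_uniformOfMass (hS : MeasurableSet S) (hSΞ : S ⊆ Ξ) (hm : 0 ≤ m) (G : E → ℝ) :
    ∫ ξ in Ξ, G ξ ∂uniformOfMass μ S m = m / (μ S).toReal * ∫ ξ in S, G ξ ∂μ := by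
  rw [restrict_uniformOfMass hS hSΞ, uniformOfMass, integral_smul_measure,
    ENNReal.toReal_ofReal (by positivity), smul_eq_mul]

lemma withDensity_indicator_uniformOfMass (hS : MeasurableSet S) (hSΞ : S ⊆ Ξ) {m' : ℝ}
    (hm' : 0 < m') (hvΞ : 0 < (μ Ξ).toReal) :
    (uniformOfMass μ Ξ m').withDensity
        (S.indicator fun _ => ENNReal.ofReal (m / (μ S).toReal / (m' / (μ Ξ).toReal)))
      = uniformOfMass μ S m := by
  rw [uniformOfMass, uniformOfMass, withDensity_smul_measure, withDensity_indicator hS,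
    Measure.restrict_restrict hS, inter_eq_left.2 hSΞ, withDensity_const, smul_smul,
    ← ENNReal.ofReal_mul (by positivity)]
  congr 2
  field_simp

theorem Bprox_uniformOfMass (hS : MeasurableSet S) (hSΞ : S ⊆ Ξ) (hS0 : μ S ≠ 0)
    (hΞfin : μ Ξ ≠ ⊤) (hm : 0 ≤ m) {m' : ℝ} (hm' : 0 < m') :
    Bprox Ξ (uniformOfMass μ S m) (uniformOfMass μ Ξ m') =
      ((Hfun m m' - m * Real.log ((μ S).toReal / (μ Ξ).toReal) : ℝ) : EReal) := by
  have hSfin : μ S ≠ ⊤ := ne_top_of_le_ne_top hΞfin (measure_mono hSΞ)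
  have hΞ0 : μ Ξ ≠ 0 := ((pos_iff_ne_zero.2 hS0).trans_le (measure_mono hSΞ)).ne'
  have hvS : 0 < (μ S).toReal := ENNReal.toReal_pos hS0 hSfin
  have hvΞ : 0 < (μ Ξ).toReal := ENNReal.toReal_pos hΞ0 hΞfin
  set Λ := uniformOfMass μ S m
  set Γ := uniformOfMass μ Ξ m'
  set α := m / (μ S).toReal / (m' / (μ Ξ).toReal)
  have hdens : Γ.withDensity (S.indicator fun _ => ENNReal.ofReal α) = Λ :=
    withDensity_indicator_uniformOfMass hS hSΞ hm' hvΞ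
  have hac : Λ ≪ Γ := hdens ▸ withDensity_absolutelyContinuous _ _
  have hrn : Λ.rnDeriv Γ =ᵐ[Λ] S.indicator fun _ => ENNReal.ofReal α := by
    refine hac.ae_le ?_
    rw [← hdens]
    exact Measure.rnDeriv_withDensity Γ (measurable_const.indicator hS)
  have hlog : (fun ξ => Real.log (Λ.rnDeriv Γ ξ).toReal) =ᵐ[Λ] fun _ => Real.log α := by
    filter_upwards [hrn, ae_mem_uniformOfMass hS] with ξ hξ hξS
    rw [hξ, indicator_of_mem hξS, ENNReal.toReal_ofReal (by positivity)]
  have hint : IntegrableOn (fun ξ => Real.log (Λ.rnDeriv Γ ξ).toReal) Ξ Λ := by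
    rw [IntegrableOn, restrict_uniformOfMass hS hSΞ]
    exact (integrable_const _).congr hlog.symm
  rw [Bprox, if_pos ⟨hac, hint⟩, restrict_uniformOfMass hS hSΞ, integral_congr_ae hlog,
    integral_const, measureReal_def, uniformOfMass_apply_of_subset hS0 hSfin (subset_univ S),
    uniformOfMass_apply_of_subset hS0 hSfin hSΞ,
    uniformOfMass_apply_of_subset hΞ0 hΞfin subset_rfl, ENNReal.toReal_ofReal hm,
    ENNReal.toReal_ofReal hm'.le, smul_eq_mul, EReal.coe_eq_coe_iff]
  rcases hm.eq_or_lt with rfl | hm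
  · simp
  rw [show α = m / m' / ((μ S).toReal / (μ Ξ).toReal) by simp only [α]; field_simp,
    Real.log_div (by positivity) (by positivity), Hfun]
  ring

lemma mul_le_div_mul_setIntegral (hS : MeasurableSet S) (hS0 : μ S ≠ 0) (hSfin : μ S ≠ ⊤)
    {G : E → ℝ} (hG : IntegrableOn G S μ) {c : ℝ} (hGc : ∀ ξ ∈ S, c ≤ G ξ) (hm : 0 ≤ m) :
    m * c ≤ m / (μ S).toReal * ∫ ξ in S, G ξ ∂μ := by
  have hvS : 0 < (μ S).toReal := ENNReal.toReal_pos hS0 hSfin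
  have h := setIntegral_ge_of_const_le_real hS hSfin hGc hG
  rw [measureReal_def] at h
  calc m * c = m / (μ S).toReal * (c * (μ S).toReal) := by field_simp
    _ ≤ m / (μ S).toReal * ∫ ξ in S, G ξ ∂μ := by gcongr

end UniformOfMass

section InnerValue

variable {E : Type*} [MeasurableSpace E] {Ξ : Set E} {ρ : ℝ} {G : E → ℝ}

/-- `sup_{Λ ∈ V} ∫_Ξ G dΛ`, where `V` is the set of measures on `Ξ` of mass at most `ρ`. -/
def innerValue (Ξ : Set E) (ρ : ℝ) (G : E → ℝ) : EReal :=
  ⨆ (Λ : Measure E) (_ : IsFiniteMeasure Λ) (_ : Λ Ξᶜ = 0) (_ : Λ Ξ ≤ ENNReal.ofReal ρ),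
    ((∫ ξ in Ξ, G ξ ∂Λ : ℝ) : EReal)

def regularizedInnerValue (Ξ : Set E) (ρ : ℝ) (G : E → ℝ) (κ : ℝ) (Γ : Measure E) : EReal :=
  ⨆ (Λ : Measure E) (_ : IsFiniteMeasure Λ) (_ : Λ Ξᶜ = 0) (_ : Λ Ξ ≤ ENNReal.ofReal ρ),
    ((∫ ξ in Ξ, G ξ ∂Λ : ℝ) : EReal) - (κ : EReal) * Bprox Ξ Λ Γ

lemma setIntegral_le_max_zero_mul {Λ : Measure E} [IsFiniteMeasure Λ] (hΞ : MeasurableSet Ξ)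
    {M : ℝ} (hGM : ∀ ξ ∈ Ξ, G ξ ≤ M) (hρ : 0 ≤ ρ) (hΛ : Λ Ξ ≤ ENNReal.ofReal ρ) :
    ∫ ξ in Ξ, G ξ ∂Λ ≤ max 0 (ρ * M) := by
  by_cases hG : IntegrableOn G Ξ Λ
  · have hint := setIntegral_mono_on hG (integrableOn_const (measure_ne_top Λ Ξ)) hΞ hGM
    rw [setIntegral_const, smul_eq_mul, measureReal_def] at hint
    have hΛρ : (Λ Ξ).toReal ≤ ρ := ENNReal.toReal_le_of_le_ofReal hρ hΛ
    rcases le_total 0 M with hM | hM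
    · exact hint.trans ((mul_le_mul_of_nonneg_right hΛρ hM).trans (le_max_right _ _))
    · exact hint.trans ((mul_nonpos_of_nonneg_of_nonpos ENNReal.toReal_nonneg hM).trans
        (le_max_left _ _))
  · rw [integral_undef hG]
    exact le_max_left _ _

lemma innerValue_le_max_zero_mul (hΞ : MeasurableSet Ξ) {M : ℝ} (hGM : ∀ ξ ∈ Ξ, G ξ ≤ M)
    (hρ : 0 ≤ ρ) : innerValue Ξ ρ G ≤ ((max 0 (ρ * M) : ℝ) : EReal) :=
  iSup_le fun _ => iSup_le fun _ => iSup_le fun _ => iSup_le fun hΛ =>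
    EReal.coe_le_coe (setIntegral_le_max_zero_mul hΞ hGM hρ hΛ)

variable {μ : Measure E} {S : Set E} {m ρ0 κ : ℝ}

theorem le_regularizedInnerValue (hS : MeasurableSet S) (hSΞ : S ⊆ Ξ) (hS0 : μ S ≠ 0)
    (hΞfin : μ Ξ ≠ ⊤) (hm : 0 ≤ m) (hmρ : m ≤ ρ) (hρ0 : 0 < ρ0) :
    ((m / (μ S).toReal * ∫ ξ in S, G ξ ∂μ
        - κ * (Hfun m ρ0 - m * Real.log ((μ S).toReal / (μ Ξ).toReal)) : ℝ) : EReal)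
      ≤ regularizedInnerValue Ξ ρ G κ (uniformOfMass μ Ξ ρ0) := by
  have hSfin : μ S ≠ ⊤ := ne_top_of_le_ne_top hΞfin (measure_mono hSΞ)
  have hmass : uniformOfMass μ S m Ξ ≤ ENNReal.ofReal ρ := by
    rw [uniformOfMass_apply_of_subset hS0 hSfin hSΞ]
    exact ENNReal.ofReal_le_ofReal hmρ
  refine le_iSup_of_le (uniformOfMass μ S m) <| le_iSup_of_le inferInstance <|
    le_iSup_of_le (uniformOfMass_compl hS hSΞ) <| le_iSup_of_le hmass (le_of_eq ?_)
  rw [setIntegral_uniformOfMass hS hSΞ hm, Bprox_uniformOfMass hS hSΞ hS0 hΞfin hm hρ0,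
    ← EReal.coe_mul, ← EReal.coe_sub]

lemma neg_le_regularizedInnerValue (hΞ : MeasurableSet Ξ) (hΞ0 : μ Ξ ≠ 0) (hΞfin : μ Ξ ≠ ⊤)
    (hρ : 0 ≤ ρ) (hρ0 : 0 < ρ0) {ε : ℝ} (hκ : κ * ρ0 ≤ ε) :
    ((-ε : ℝ) : EReal) ≤ regularizedInnerValue Ξ ρ G κ (uniformOfMass μ Ξ ρ0) := by
  refine le_trans (EReal.coe_le_coe ?_)
    (le_regularizedInnerValue (G := G) hΞ subset_rfl hΞ0 hΞfin le_rfl hρ hρ0)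
  simpa using hκ

lemma mul_le_regularizedInnerValue_of_nonpos (hΞ : MeasurableSet Ξ) (hΞ0 : μ Ξ ≠ 0)
    (hΞfin : μ Ξ ≠ ⊤) (hG : IntegrableOn G Ξ μ) {c : ℝ} (hGc : ∀ ξ ∈ Ξ, c ≤ G ξ) (hρ : 0 ≤ ρ)
    (hρ0 : 0 < ρ0) (hκ : κ ≤ 0) :
    ((ρ * c : ℝ) : EReal) ≤ regularizedInnerValue Ξ ρ G κ (uniformOfMass μ Ξ ρ0) := by
  refine le_trans (EReal.coe_le_coe ?_) (le_regularizedInnerValue hΞ subset_rfl hΞ0 hΞfin hρ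
    le_rfl hρ0)
  have hvΞ : 0 < (μ Ξ).toReal := ENNReal.toReal_pos hΞ0 hΞfin
  rw [div_self hvΞ.ne', Real.log_one, mul_zero, sub_zero]
  nlinarith [mul_le_div_mul_setIntegral hΞ hΞ0 hΞfin hG hGc hρ, Hfun_nonneg hρ hρ0]

end InnerValue

section Geometry

variable {E : Type*} [NormedAddCommGroup E] [NormedSpace ℝ E]

theorem Convex.closedBall_add_smul_sub_subset {Ξ : Set E} (hΞ : Convex ℝ Ξ) {x c : E} {R κ : ℝ}
    (hx : x ∈ Ξ) (hball : closedBall c R ⊆ Ξ) (hκ : 0 < κ) (hκ1 : κ ≤ 1) :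
    closedBall (x + κ • (c - x)) (κ * R) ⊆ Ξ := by
  intro y hy
  set b := c + κ⁻¹ • (y - (x + κ • (c - x)))
  have hb : b ∈ Ξ := by
    refine hball ?_
    rw [mem_closedBall, dist_eq_norm] at hy ⊢
    rwa [add_sub_cancel_left, norm_smul, Real.norm_of_nonneg (inv_nonneg.2 hκ.le),
      inv_mul_le_iff₀ hκ]
  convert hΞ.add_smul_sub_mem hx hb ⟨hκ.le, hκ1⟩ using 1
  rw [show κ • (b - x) = κ • (c - x) + (κ * κ⁻¹) • (y - (x + κ • (c - x))) by
    simp only [b]; module, mul_inv_cancel₀ hκ.ne', one_smul]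
  abel

lemma norm_sub_le_of_mem_closedBall_add_smul_sub {x c y : E} {R κ : ℝ} (hκ : 0 ≤ κ)
    (hy : y ∈ closedBall (x + κ • (c - x)) (κ * R)) : ‖y - x‖ ≤ κ * (R + ‖c - x‖) := by
  rw [mem_closedBall, dist_eq_norm] at hy
  calc ‖y - x‖ ≤ ‖y - (x + κ • (c - x))‖ + ‖x + κ • (c - x) - x‖ :=
        norm_sub_le_norm_sub_add_norm_sub _ _ _
    _ ≤ κ * R + κ * ‖c - x‖ := by
        rw [add_sub_cancel_left, norm_smul, Real.norm_of_nonneg hκ]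
        exact add_le_add_left hy _
    _ = κ * (R + ‖c - x‖) := by ring

lemma sub_le_of_mem_closedBall_add_smul_sub {Ξ : Set E} (hΞ : Bornology.IsBounded Ξ)
    {G : E → ℝ} {L : ℝ} (hL : 0 ≤ L) (hLip : ∀ ξ ∈ Ξ, ∀ ζ ∈ Ξ, |G ξ - G ζ| ≤ L * ‖ξ - ζ‖)
    {x c y : E} {R κ : ℝ} (hx : x ∈ Ξ) (hc : c ∈ Ξ) (hκ : 0 ≤ κ) (hyΞ : y ∈ Ξ)
    (hy : y ∈ closedBall (x + κ • (c - x)) (κ * R)) : G x - L * (κ * (R + diam Ξ)) ≤ G y := by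
  have hdist : ‖y - x‖ ≤ κ * (R + diam Ξ) := by
    refine (norm_sub_le_of_mem_closedBall_add_smul_sub hκ hy).trans ?_
    rw [← dist_eq_norm]
    gcongr
    exact dist_le_diam_of_mem hΞ hc hx
  have h := (abs_le.1 (hLip y hyΞ x hx)).1
  nlinarith [mul_le_mul_of_nonneg_left hdist hL]

lemma nonneg_of_abs_sub_le_mul_norm [Nontrivial E] {Ξ : Set E} {G : E → ℝ} {L R : ℝ} {c : E}
    (hR : 0 < R) (hball : closedBall c R ⊆ Ξ)
    (hLip : ∀ ξ ∈ Ξ, ∀ ζ ∈ Ξ, |G ξ - G ζ| ≤ L * ‖ξ - ζ‖) : 0 ≤ L := by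
  obtain ⟨y, hy⟩ := (NormedSpace.sphere_nonempty (x := c)).2 hR.le
  have h := (abs_nonneg _).trans (hLip y (hball (sphere_subset_closedBall hy)) c
    (hball (mem_closedBall_self hR.le)))
  rw [← dist_eq_norm, mem_sphere.1 hy] at h
  exact nonneg_of_mul_nonneg_left h hR

end Geometry

/-- The paper's `κ̄(ε)`, with `δ` the dimension. -/
def regularizationParam (ε C ρ δ ρ0 : ℝ) : ℝ :=
  min (min (ε / (2 * C)) ((ε / (2 * ρ * δ)) ^ 2)) (min (ε / ρ0) 1)

section RegularizationParam

variable {ε C ρ δ ρ0 : ℝ}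

lemma regularizationParam_mul_le (hρ0 : 0 < ρ0) : regularizationParam ε C ρ δ ρ0 * ρ0 ≤ ε :=
  (le_div_iff₀ hρ0).1 ((min_le_right _ _).trans (min_le_left _ _))

lemma regularizationParam_zero_le : regularizationParam ε C ρ 0 ρ0 ≤ 0 :=
  (min_le_left _ _).trans ((min_le_right _ _).trans (by simp))

lemma regularizationParam_spec (hε : 0 < ε) (hC : 0 < C) (hρ : 0 < ρ) (hδ : 0 < δ)
    (hρ0 : 0 < ρ0) :
    let κ := regularizationParam ε C ρ δ ρ0
    0 < κ ∧ κ ≤ 1 ∧ κ * C ≤ ε / 2 ∧ ρ * δ * √κ ≤ ε / 2 := by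
  intro κ
  have hκC : κ ≤ ε / (2 * C) := (min_le_left _ _).trans (min_le_left _ _)
  have hκδ : √κ ≤ ε / (2 * ρ * δ) :=
    (Real.sqrt_le_left (by positivity)).2 ((min_le_left _ _).trans (min_le_right _ _))
  refine ⟨lt_min (lt_min (by positivity) (by positivity)) (lt_min (by positivity) one_pos),
    (min_le_right _ _).trans (min_le_right _ _), ?_, ?_⟩
  · rw [le_div_iff₀ (by positivity)] at hκC
    linarith
  · rw [le_div_iff₀ (by positivity)] at hκδ
    linarith

end RegularizationParam

section Ball

variable {E : Type*} [NormedAddCommGroup E] [NormedSpace ℝ E] [FiniteDimensional ℝ E]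
  [MeasurableSpace E] [BorelSpace E] (μ : Measure E) [μ.IsAddHaarMeasure]

theorem le_regularizedInnerValue_of_closedBall_subset {Ξ : Set E} (hΞconv : Convex ℝ Ξ)
    (hΞcomp : IsCompact Ξ) {G : E → ℝ} (hGcont : ContinuousOn G Ξ) {L : ℝ} (hL : 0 ≤ L)
    (hLip : ∀ ξ ∈ Ξ, ∀ ζ ∈ Ξ, |G ξ - G ζ| ≤ L * ‖ξ - ζ‖) {ξs ξt : E} (hξs : ξs ∈ Ξ) {R : ℝ}
    (hR : 0 < R) (hball : closedBall ξt R ⊆ Ξ)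
    {ρ ρ0 H κ : ℝ} (hρ : 0 ≤ ρ) (hρ0 : 0 < ρ0) (hH : Hfun ρ ρ0 ≤ H) (hκ : 0 < κ) (hκ1 : κ ≤ 1) :
    ((ρ * G ξs - κ * (ρ * (L * (R + diam Ξ))
          - ρ * Real.log ((μ (closedBall ξt R)).toReal / (μ Ξ).toReal) + H)
        - ρ * finrank ℝ E * Real.negMulLog κ : ℝ) : EReal)
      ≤ regularizedInnerValue Ξ ρ G κ (uniformOfMass μ Ξ ρ0) := by
  set S := closedBall (ξs + κ • (ξt - ξs)) (κ * R)
  have hSΞ : S ⊆ Ξ := hΞconv.closedBall_add_smul_sub_subset hξs hball hκ hκ1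
  have hGS : ∀ ξ ∈ S, G ξs - L * (κ * (R + diam Ξ)) ≤ G ξ := fun ξ hξ =>
    sub_le_of_mem_closedBall_add_smul_sub hΞcomp.isBounded hL hLip hξs
      (hball (mem_closedBall_self hR.le)) hκ.le (hSΞ hξ) hξ
  have hB0 : μ (closedBall ξt R) ≠ 0 := (measure_closedBall_pos μ ξt hR).ne'
  have hBfin : μ (closedBall ξt R) ≠ ⊤ := measure_closedBall_lt_top.ne
  have hΞfin : μ Ξ ≠ ⊤ := hΞcomp.measure_lt_top.ne
  have hvB : 0 < (μ (closedBall ξt R)).toReal := ENNReal.toReal_pos hB0 hBfin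
  have hvΞ : 0 < (μ Ξ).toReal :=
    ENNReal.toReal_pos ((pos_iff_ne_zero.2 hB0).trans_le (measure_mono hball)).ne' hΞfin
  have hvS : (μ S).toReal = κ ^ finrank ℝ E * (μ (closedBall ξt R)).toReal := by
    rw [Measure.addHaar_closedBall_mul μ _ hκ.le hR.le, ← Measure.addHaar_closedBall_center μ ξt,
      ENNReal.toReal_mul, ENNReal.toReal_ofReal (by positivity)]
  have hS0 : μ S ≠ 0 := (measure_closedBall_pos μ _ (mul_pos hκ hR)).ne'
  refine le_trans (EReal.coe_le_coe ?_) (le_regularizedInnerValue measurableSet_closedBall hSΞ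
    hS0 hΞfin hρ le_rfl hρ0)
  have hint := mul_le_div_mul_setIntegral measurableSet_closedBall hS0 measure_closedBall_lt_top.ne
    ((hGcont.mono hSΞ).integrableOn_compact (isCompact_closedBall _ _)) hGS hρ
  rw [hvS] at hint ⊢
  rw [mul_div_assoc, Real.log_mul (by positivity) (by positivity), Real.log_pow,
    Real.negMulLog]
  nlinarith [mul_le_mul_of_nonneg_left hH hκ.le]

theorem sub_le_regularizedInnerValue [Nontrivial E] {Ξ : Set E} (hΞconv : Convex ℝ Ξ)
    (hΞcomp : IsCompact Ξ) {G : E → ℝ} (hGcont : ContinuousOn G Ξ) {L : ℝ}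
    (hLip : ∀ ξ ∈ Ξ, ∀ ζ ∈ Ξ, |G ξ - G ζ| ≤ L * ‖ξ - ζ‖) {ξs ξt : E} (hξs : ξs ∈ Ξ) {R : ℝ}
    (hR : 0 < R) (hball : closedBall ξt R ⊆ Ξ) {ρ ρ0 H ε : ℝ} (hρ : 0 < ρ) (hρ0 : 0 < ρ0)
    (hH : Hfun ρ ρ0 ≤ H) (hH0 : 0 < H) (hε : 0 < ε) :
    ((ρ * G ξs - ε : ℝ) : EReal) ≤ regularizedInnerValue Ξ ρ G
      (regularizationParam ε (ρ * (L * (R + diam Ξ))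
        - ρ * Real.log ((μ (closedBall ξt R)).toReal / (μ Ξ).toReal) + H) ρ (finrank ℝ E) ρ0)
      (uniformOfMass μ Ξ ρ0) := by
  have hL : 0 ≤ L := nonneg_of_abs_sub_le_mul_norm hR hball hLip
  have hr : Real.log ((μ (closedBall ξt R)).toReal / (μ Ξ).toReal) ≤ 0 :=
    Real.log_nonpos (by positivity) (div_le_one_of_le₀
      (ENNReal.toReal_mono hΞcomp.measure_lt_top.ne (measure_mono hball)) ENNReal.toReal_nonneg)
  have hC : 0 < ρ * (L * (R + diam Ξ))
      - ρ * Real.log ((μ (closedBall ξt R)).toReal / (μ Ξ).toReal) + H := by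
    have := mul_nonneg hρ.le (mul_nonneg hL (add_nonneg hR.le (diam_nonneg (s := Ξ))))
    nlinarith
  have hd : (0 : ℝ) < finrank ℝ E := Nat.cast_pos.2 finrank_pos
  obtain ⟨hκ0, hκ1, hκC, hκd⟩ := regularizationParam_spec hε hC hρ hd hρ0
  refine le_trans (EReal.coe_le_coe ?_) (le_regularizedInnerValue_of_closedBall_subset μ
    hΞconv hΞcomp hGcont hL hLip hξs hR hball hρ.le hρ0 hH hκ0 hκ1)
  nlinarith [Real.negMulLog_le_sqrt hκ0.le, mul_pos hρ hd]

end Ball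

/-- With the regularization parameter `κ̄(ε) = min{ ε/(2C̄), (ε/(2ρ̄d))², ε/ρ₀, 1 }`,
the regularized inner maximization is within `ε` of the unregularized one:
`sup_{Λ∈V} { ∫_Ξ G dΛ − κ̄(ε) B(Λ,Λ_u) } ≥ sup_{Λ∈V} ∫_Ξ G dΛ − ε`. -/
theorem stmt_13 {d : ℕ} (Ξ : Set (EuclideanSpace ℝ (Fin d)))
    (hΞconv : Convex ℝ Ξ) (hΞcomp : IsCompact Ξ) (hvol : 0 < volume Ξ)
    (ξt : EuclideanSpace ℝ (Fin d)) (hξt : ξt ∈ Ξ)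
    (R : ℝ) (hR : 0 < R) (hball : Metric.closedBall ξt R ⊆ Ξ)
    (G : EuclideanSpace ℝ (Fin d) → ℝ) (hGcont : ContinuousOn G Ξ)
    (L : ℝ) (hLip : ∀ ξ ∈ Ξ, ∀ ζ ∈ Ξ, |G ξ - G ζ| ≤ L * ‖ξ - ζ‖)
    (ρbar ρ0 : ℝ) (hρbar : 0 < ρbar) (hρ0 : ρ0 ∈ Set.Ioc (0 : ℝ) ρbar)
    (ε : ℝ) (hε : 0 < ε) :
    -- `Λ_u` : the measure with constant Lebesgue density `ρ₀ / vol(Ξ)` on `Ξ`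
    let Λu : Measure (EuclideanSpace ℝ (Fin d)) :=
      ENNReal.ofReal (ρ0 / (volume Ξ).toReal) • volume.restrict Ξ
    -- `r` : volume ratio of the ball `B_R(ξt)` and `Ξ`
    let r : ℝ := (volume (Metric.closedBall ξt R)).toReal / (volume Ξ).toReal
    -- `H_max = max_{ρ ∈ [0,ρ̄]} H(ρ,ρ₀)`
    let Hmax : ℝ := sSup ((fun ρ => Hfun ρ ρ0) '' Set.Icc 0 ρbar)
    -- `C̄ = ρ̄ L (R + D_Ξ) − ρ̄ log r + H_max`
    let Cbar : ℝ := ρbar * (L * (R + Metric.diam Ξ)) - ρbar * Real.log r + Hmax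
    -- `κ̄(ε)`
    let κbar : ℝ := min (min (ε / (2 * Cbar)) ((ε / (2 * ρbar * d)) ^ 2)) (min (ε / ρ0) 1)
    (⨆ (Λ : Measure (EuclideanSpace ℝ (Fin d))) (_ : IsFiniteMeasure Λ) (_ : Λ Ξᶜ = 0)
          (_ : Λ Ξ ≤ ENNReal.ofReal ρbar), ((∫ ξ in Ξ, G ξ ∂Λ : ℝ) : EReal))
        - (ε : EReal)
      ≤ ⨆ (Λ : Measure (EuclideanSpace ℝ (Fin d))) (_ : IsFiniteMeasure Λ) (_ : Λ Ξᶜ = 0)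
          (_ : Λ Ξ ≤ ENNReal.ofReal ρbar),
          ((∫ ξ in Ξ, G ξ ∂Λ : ℝ) : EReal) - (κbar : EReal) * Bprox Ξ Λ Λu := by
  intro Λu r Hmax Cbar κbar
  change _ ≤ regularizedInnerValue Ξ ρbar G (regularizationParam ε Cbar ρbar d ρ0)
    (uniformOfMass volume Ξ ρ0)
  obtain ⟨ξs, hξs, hmax⟩ := hΞcomp.exists_isMaxOn ⟨ξt, hξt⟩ hGcont
  have hΞm : MeasurableSet Ξ := hΞcomp.isClosed.measurableSet
  have hΞfin : volume Ξ ≠ ⊤ := hΞcomp.measure_lt_top.ne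
  suffices hlower : ((max 0 (ρbar * G ξs) - ε : ℝ) : EReal)
      ≤ regularizedInnerValue Ξ ρbar G (regularizationParam ε Cbar ρbar d ρ0)
        (uniformOfMass volume Ξ ρ0) by
    rw [EReal.coe_sub] at hlower
    exact (EReal.sub_le_sub (innerValue_le_max_zero_mul hΞm hmax hρbar.le) le_rfl).trans hlower
  rcases le_or_gt (G ξs) 0 with hM | hM
  · rw [max_eq_left (mul_nonpos_of_nonneg_of_nonpos hρbar.le hM), zero_sub]
    exact neg_le_regularizedInnerValue hΞm hvol.ne' hΞfin hρbar.le hρ0.1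
      (regularizationParam_mul_le hρ0.1)
  rw [max_eq_right (by positivity)]
  have hHmax : Hfun ρbar ρ0 ≤ Hmax := le_sSup_image_Hfun hρ0.1.ne' ⟨hρbar.le, le_rfl⟩
  rcases Nat.eq_zero_or_pos d with rfl | hd
  · refine le_trans (EReal.coe_le_coe (by linarith)) (mul_le_regularizedInnerValue_of_nonpos hΞm
      hvol.ne' hΞfin (hGcont.integrableOn_compact hΞcomp) (c := G ξs)
      (fun ξ _ => (congrArg G (Subsingleton.elim ξ ξs)).ge) hρbar.le hρ0.1
      (by rw [Nat.cast_zero]; exact regularizationParam_zero_le))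
  have : NeZero d := ⟨hd.ne'⟩
  have hH0 : 0 < Hmax := hρ0.1.trans_le <|
    (Hfun_zero_left ρ0).ge.trans (le_sSup_image_Hfun hρ0.1.ne' ⟨le_rfl, hρbar.le⟩)
  have h := sub_le_regularizedInnerValue volume hΞconv hΞcomp hGcont hLip hξs hR hball hρbar
    hρ0.1 hHmax hH0 hε
  rwa [finrank_euclideanSpace_fin] at h
end
end

section
/- Let Ξ ⊂ ℝ^d be compact with vol(Ξ) > 0, let g : Ξ → ℝ be continuous, let γ > 0 and κ > 0, let φ_u be the uniform probability measure on Ξ, and let φ₀ be a Borel probability measure on Ξ with a continuous, everywhere positive Lebesgue density p₀. Then the functional φ ↦ D(φ, φ₀) + γκ·D(φ, φ_u) − γ·∫_Ξ g dφ over Borel probability measures φ on Ξ attains its minimum at the probability measure φ* with Lebesgue density φ*(ξ) = p₀(ξ)^{1/(1+γκ)} exp(γ g(ξ)/(1+γκ)) / ∫_Ξ p₀(ζ)^{1/(1+γκ)} exp(γ g(ζ)/(1+γκ)) dζ, and the minimum value equals −(1+γκ)·log( ∫_Ξ p₀(ξ)^{1/(1+γκ)} exp(γ g(ξ)/(1+γκ))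 dξ ) + γκ·log(vol(Ξ)). -/
/-!
Write `μ` for Lebesgue measure restricted to `Ξ`. The measures `φ₀`, `φ_u` and `φ*` all have
densities with respect to `μ` that are positive on `Ξ`, so for `φ ≪ μ` each log-likelihood ratio
`log (dφ/dψ)` is `log (dφ/dμ)` minus the log of the density of `ψ`. As
`log (dφ*/dμ) = (log p₀ + γ g) / (1 + γκ) - log Z`, this gives, `φ`-almost everywhere,
`log (dφ/dφ₀) + γκ log (dφ/dφ_u) - γ g = (1 + γκ) log (dφ/dφ*) - (1 + γκ) log Z + γκ log vol(Ξ)`.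
Integrating, the objective is `(1 + γκ) D(φ, φ*)` plus the claimed minimum value, and Gibbs'
inequality `D(φ, φ*) ≥ 0` (with equality at `φ = φ*`) concludes. If either divergence is infinite,
so is the objective, because `γκ > 0`.
-/

open MeasureTheory Set
open scoped Classical

noncomputable section

section LogLikelihoodRatio

open Real

variable {α : Type*} [MeasurableSpace α] {μ φ : Measure α}

lemma llr_withDensity_ofReal_left [SigmaFinite μ] {f : α → ℝ} (hf : AEMeasurable f μ)
    (hf_nonneg : 0 ≤ᵐ[μ] f) :
    llr (μ.withDensity fun x ↦ ENNReal.ofReal (f x)) μ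
      =ᵐ[μ.withDensity fun x ↦ ENNReal.ofReal (f x)] fun x ↦ log (f x) := by
  filter_upwards [withDensity_absolutelyContinuous _ _ |>.ae_le <|
      Measure.rnDeriv_withDensity₀ μ hf.ennreal_ofReal,
    withDensity_absolutelyContinuous _ _ |>.ae_le hf_nonneg] with x hx hx_nonneg
  rw [llr, hx, ENNReal.toReal_ofReal hx_nonneg]

lemma llr_withDensity_ofReal_right [SigmaFinite μ] [SigmaFinite φ] (hφμ : φ ≪ μ) {f : α → ℝ}
    (hf : AEMeasurable f μ) (hf_pos : ∀ᵐ x ∂μ, 0 < f x) :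
    llr φ (μ.withDensity fun x ↦ ENNReal.ofReal (f x)) =ᵐ[φ] fun x ↦ llr φ μ x - log (f x) := by
  have h := Measure.rnDeriv_withDensity_right φ μ hf.ennreal_ofReal
    (hf_pos.mono fun x hx ↦ (ENNReal.ofReal_pos.2 hx).ne')
    (ae_of_all _ fun _ ↦ ENNReal.ofReal_ne_top)
  filter_upwards [hφμ.ae_le h, hφμ.ae_le hf_pos, Measure.rnDeriv_pos hφμ,
    hφμ.ae_le (Measure.rnDeriv_lt_top φ μ)] with x hx hfx hx_pos hx_lt_top
  rw [llr, llr, hx, ENNReal.toReal_mul, ENNReal.toReal_inv, ENNReal.toReal_ofReal hfx.le,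
    log_mul (inv_ne_zero hfx.ne') (ENNReal.toReal_pos hx_pos.ne' hx_lt_top.ne).ne', log_inv]
  ring

lemma absolutelyContinuous_withDensity_ofReal {f : α → ℝ} (hf : AEMeasurable f μ)
    (hf_pos : ∀ᵐ x ∂μ, 0 < f x) : μ ≪ μ.withDensity fun x ↦ ENNReal.ofReal (f x) :=
  withDensity_absolutelyContinuous' hf.ennreal_ofReal
    (hf_pos.mono fun _ hx ↦ (ENNReal.ofReal_pos.2 hx).ne')

lemma integral_llr_nonneg [IsProbabilityMeasure μ] [IsProbabilityMeasure φ] (hφμ : φ ≪ μ)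
    (h_int : Integrable (llr φ μ) φ) : 0 ≤ ∫ x, llr φ μ x ∂φ := by
  simpa using InformationTheory.integral_llr_add_sub_measure_univ_nonneg hφμ h_int

lemma isProbabilityMeasure_withDensity_div_integral {f : α → ℝ} (hf : Integrable f μ)
    (hf_nonneg : 0 ≤ᵐ[μ] f) (h_ne : ∫ x, f x ∂μ ≠ 0) :
    IsProbabilityMeasure (μ.withDensity fun x ↦ ENNReal.ofReal (f x / ∫ x, f x ∂μ)) := by
  constructor
  rw [withDensity_apply _ MeasurableSet.univ, Measure.restrict_univ,
    ← ofReal_integral_eq_lintegral_ofReal (hf.div_const _), integral_div, div_self h_ne,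
    ENNReal.ofReal_one]
  filter_upwards [hf_nonneg] with x hx
  exact div_nonneg hx (integral_nonneg_of_ae hf_nonneg)

end LogLikelihoodRatio

section Gibbs

open Real
open scoped ENNReal

variable {α : Type*}

def gibbsDensity (γ κ : ℝ) (p g : α → ℝ) (x : α) : ℝ :=
  p x ^ (1 / (1 + γ * κ)) * exp (γ * g x / (1 + γ * κ))

variable {γ κ : ℝ} {p g : α → ℝ}

lemma gibbsDensity_pos {x : α} (hp : 0 < p x) : 0 < gibbsDensity γ κ p g x :=
  mul_pos (rpow_pos_of_pos hp _) (exp_pos _)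

lemma log_gibbsDensity {x : α} (hp : 0 < p x) :
    log (gibbsDensity γ κ p g x) = (log (p x) + γ * g x) / (1 + γ * κ) := by
  rw [gibbsDensity, log_mul (rpow_pos_of_pos hp _).ne' (exp_pos _).ne', log_rpow hp, log_exp]
  ring

lemma ContinuousOn.gibbsDensity [TopologicalSpace α] {s : Set α} (hp : ContinuousOn p s)
    (hp_pos : ∀ x ∈ s, 0 < p x) (hg : ContinuousOn g s) :
    ContinuousOn (_root_.gibbsDensity γ κ p g) s :=
  (hp.rpow_const fun x hx ↦ Or.inl (hp_pos x hx).ne').mul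
    ((continuousOn_const.mul hg).div_const _).rexp

variable [MeasurableSpace α] {μ φ : Measure α} {Z : ℝ} {c : ℝ≥0∞}

lemma AEMeasurable.gibbsDensity (hp : AEMeasurable p μ) (hg : AEMeasurable g μ) :
    AEMeasurable (_root_.gibbsDensity γ κ p g) μ := by
  unfold _root_.gibbsDensity
  fun_prop

abbrev gibbsMeasure (μ : Measure α) (γ κ : ℝ) (p g : α → ℝ) (Z : ℝ) : Measure α :=
  μ.withDensity fun x ↦ ENNReal.ofReal (gibbsDensity γ κ p g x / Z)

lemma gibbsMeasure_absolutelyContinuous : gibbsMeasure μ γ κ p g Z ≪ μ :=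
  withDensity_absolutelyContinuous _ _

lemma llr_objective_ae_eq [SigmaFinite μ] [IsFiniteMeasure φ] (hφμ : φ ≪ μ)
    (hγκ : 1 + γ * κ ≠ 0) (hp : AEMeasurable p μ) (hp_pos : ∀ᵐ x ∂μ, 0 < p x)
    (hg : AEMeasurable g μ) (hZ : 0 < Z) (hc : c ≠ 0) (hc_top : c ≠ ∞) :
    (fun x ↦ llr φ (μ.withDensity fun x ↦ ENNReal.ofReal (p x)) x
        + γ * κ * llr φ (c⁻¹ • μ) x - γ * g x)
      =ᵐ[φ] fun x ↦ (1 + γ * κ) * llr φ (gibbsMeasure μ γ κ p g Z) x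
        - (1 + γ * κ) * log Z + γ * κ * log c.toReal := by
  have hq_pos : ∀ᵐ x ∂μ, 0 < gibbsDensity γ κ p g x / Z :=
    hp_pos.mono fun x hx ↦ div_pos (gibbsDensity_pos hx) hZ
  filter_upwards [llr_withDensity_ofReal_right hφμ hp hp_pos,
    llr_withDensity_ofReal_right hφμ ((hp.gibbsDensity hg).div_const Z) hq_pos,
    llr_smul_right hφμ c⁻¹ (ENNReal.inv_ne_zero.2 hc_top) (ENNReal.inv_ne_top.2 hc),
    hφμ.ae_le hp_pos] with x h_prior h_gibbs h_unif hpx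
  rw [gibbsMeasure, h_prior, h_gibbs, h_unif, log_div (gibbsDensity_pos hpx).ne' hZ.ne',
    log_gibbsDensity hpx, ENNReal.toReal_inv, log_inv]
  field_simp
  ring

lemma integral_llr_objective_eq [SigmaFinite μ] [IsProbabilityMeasure φ] (hφμ : φ ≪ μ)
    (hγκ : 1 + γ * κ ≠ 0) (hp : AEMeasurable p μ)
    (hp_pos : ∀ᵐ x ∂μ, 0 < p x) (hg : AEMeasurable g μ) (hZ : 0 < Z) (hc : c ≠ 0)
    (hc_top : c ≠ ∞)
    (h_prior : Integrable (llr φ (μ.withDensity fun x ↦ ENNReal.ofReal (p x))) φ)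
    (h_unif : Integrable (llr φ (c⁻¹ • μ)) φ) (hgφ : Integrable g φ) :
    Integrable (llr φ (gibbsMeasure μ γ κ p g Z)) φ ∧
    ∫ x, llr φ (μ.withDensity fun x ↦ ENNReal.ofReal (p x)) x ∂φ
        + γ * κ * ∫ x, llr φ (c⁻¹ • μ) x ∂φ - γ * ∫ x, g x ∂φ
      = (1 + γ * κ) * ∫ x, llr φ (gibbsMeasure μ γ κ p g Z) x ∂φ
        - (1 + γ * κ) * log Z + γ * κ * log c.toReal := by
  have h := llr_objective_ae_eq hφμ hγκ hp hp_pos hg hZ hc hc_top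
  have h_lhs : Integrable (fun x ↦ llr φ (μ.withDensity fun x ↦ ENNReal.ofReal (p x)) x
      + γ * κ * llr φ (c⁻¹ • μ) x - γ * g x) φ :=
    (h_prior.add (h_unif.const_mul (γ * κ))).sub (hgφ.const_mul γ)
  have h_gibbs : Integrable (fun x ↦ (1 + γ * κ) * llr φ (gibbsMeasure μ γ κ p g Z) x) φ := by
    refine ((h_lhs.congr h).add
      (integrable_const ((1 + γ * κ) * log Z - γ * κ * log c.toReal))).congr
      (ae_of_all _ fun x ↦ ?_)
    simp only [Pi.add_apply]
    ring
  refine ⟨(integrable_const_mul_iff (isUnit_iff_ne_zero.2 hγκ) _).1 h_gibbs, ?_⟩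
  rw [← integral_const_mul, ← integral_const_mul, ← integral_add h_prior (h_unif.const_mul _),
    ← integral_sub ?_ (hgφ.const_mul _), integral_congr_ae h, integral_add ?_ (integrable_const _),
    integral_sub h_gibbs (integrable_const _), integral_const_mul]
  · simp
  · exact h_gibbs.sub (integrable_const _)
  · exact h_prior.add (h_unif.const_mul _)

end Gibbs

section Objective

open Real
open scoped ENNReal

variable {α : Type*} [MeasurableSpace α] {Ξ : Set α} {μ φ ψ : Measure α}

lemma KLdiv_of_measure_compl_eq_zero (hφ : φ Ξᶜ = 0) :
    KLdiv Ξ φ ψ = if φ ≪ ψ ∧ Integrable (llr φ ψ) φ then ((∫ x, llr φ ψ x ∂φ : ℝ) : EReal)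
      else ⊤ := by
  rw [KLdiv, IntegrableOn, Measure.restrict_eq_self_of_ae_mem (mem_ae_iff.2 hφ)]
  rfl

def dualObjective (Ξ : Set α) (φ0 φu : Measure α) (γ κ : ℝ) (g : α → ℝ) (φ : Measure α) :
    EReal :=
  KLdiv Ξ φ φ0 + ((γ * κ : ℝ) : EReal) * KLdiv Ξ φ φu
    - (γ : EReal) * ((∫ ξ in Ξ, g ξ ∂φ : ℝ) : EReal)

variable {φ0 φu : Measure α} {γ κ Z : ℝ} {c : ℝ≥0∞} {p g : α → ℝ}

lemma dualObjective_eq_coe (hφ : φ Ξᶜ = 0) (h_prior : φ ≪ φ0 ∧ Integrable (llr φ φ0) φ)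
    (h_unif : φ ≪ φu ∧ Integrable (llr φ φu) φ) :
    dualObjective Ξ φ0 φu γ κ g φ = ((∫ x, llr φ φ0 x ∂φ + γ * κ * ∫ x, llr φ φu x ∂φ
      - γ * ∫ x, g x ∂φ : ℝ) : EReal) := by
  rw [dualObjective, KLdiv_of_measure_compl_eq_zero hφ, KLdiv_of_measure_compl_eq_zero hφ,
    if_pos h_prior, if_pos h_unif, Measure.restrict_eq_self_of_ae_mem (mem_ae_iff.2 hφ)]
  norm_cast

lemma dualObjective_eq_top (hφ : φ Ξᶜ = 0) (hγκ : 0 < γ * κ)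
    (h : ¬((φ ≪ φ0 ∧ Integrable (llr φ φ0) φ) ∧ (φ ≪ φu ∧ Integrable (llr φ φu) φ))) :
    dualObjective Ξ φ0 φu γ κ g φ = ⊤ := by
  have hγκ' : (0 : EReal) < ((γ * κ : ℝ) : EReal) := by exact_mod_cast hγκ
  rw [dualObjective, KLdiv_of_measure_compl_eq_zero hφ, KLdiv_of_measure_compl_eq_zero hφ]
  split_ifs with h_prior h_unif
  · exact absurd ⟨h_prior, h_unif⟩ h
  · rw [EReal.mul_top_of_pos hγκ', EReal.coe_add_top, ← EReal.coe_mul, EReal.top_sub_coe]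
  · rw [← EReal.coe_mul, EReal.top_add_coe, ← EReal.coe_mul, EReal.top_sub_coe]
  · rw [EReal.mul_top_of_pos hγκ', EReal.top_add_top, ← EReal.coe_mul, EReal.top_sub_coe]

lemma le_dualObjective [SigmaFinite μ] [IsProbabilityMeasure φ] (hγκ : 0 < γ * κ)
    (hp : AEMeasurable p μ) (hp_pos : ∀ᵐ x ∂μ, 0 < p x) (hg : AEMeasurable g μ) (hZ : 0 < Z)
    (hc : c ≠ 0) (hc_top : c ≠ ∞) [IsProbabilityMeasure (gibbsMeasure μ γ κ p g Z)]
    (hφ : φ Ξᶜ = 0) (hgφ : Integrable g φ) :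
    ((-(1 + γ * κ) * log Z + γ * κ * log c.toReal : ℝ) : EReal)
      ≤ dualObjective Ξ (μ.withDensity fun x ↦ ENNReal.ofReal (p x)) (c⁻¹ • μ) γ κ g φ := by
  by_cases h : (φ ≪ μ.withDensity (fun x ↦ ENNReal.ofReal (p x)) ∧
      Integrable (llr φ (μ.withDensity fun x ↦ ENNReal.ofReal (p x))) φ) ∧
      (φ ≪ c⁻¹ • μ ∧ Integrable (llr φ (c⁻¹ • μ)) φ)
  · obtain ⟨⟨h_prior_ac, h_prior⟩, h_unif_ac, h_unif⟩ := h
    have hφμ : φ ≪ μ := h_prior_ac.trans (withDensity_absolutelyContinuous _ _)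
    have h_gibbs_ac : φ ≪ gibbsMeasure μ γ κ p g Z :=
      hφμ.trans <| absolutelyContinuous_withDensity_ofReal ((hp.gibbsDensity hg).div_const Z)
        (hp_pos.mono fun x hx ↦ div_pos (gibbsDensity_pos hx) hZ)
    have hγκ_one : 0 < 1 + γ * κ := by linarith
    obtain ⟨h_gibbs, h_eq⟩ := integral_llr_objective_eq hφμ hγκ_one.ne' hp hp_pos hg hZ hc
      hc_top h_prior h_unif hgφ
    rw [dualObjective_eq_coe hφ ⟨h_prior_ac, h_prior⟩ ⟨h_unif_ac, h_unif⟩, h_eq,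
      EReal.coe_le_coe_iff]
    nlinarith [integral_llr_nonneg h_gibbs_ac h_gibbs]
  · rw [dualObjective_eq_top hφ hγκ h]
    exact le_top

lemma dualObjective_gibbsMeasure [SigmaFinite μ] (hγκ : 1 + γ * κ ≠ 0)
    (hp : AEMeasurable p μ) (hp_pos : ∀ᵐ x ∂μ, 0 < p x) (hg : AEMeasurable g μ) (hZ : 0 < Z)
    (hc : c ≠ 0) (hc_top : c ≠ ∞) [IsProbabilityMeasure (gibbsMeasure μ γ κ p g Z)]
    (h_compl : gibbsMeasure μ γ κ p g Z Ξᶜ = 0)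
    (h_prior : Integrable (llr (gibbsMeasure μ γ κ p g Z)
      (μ.withDensity fun x ↦ ENNReal.ofReal (p x))) (gibbsMeasure μ γ κ p g Z))
    (h_unif : Integrable (llr (gibbsMeasure μ γ κ p g Z) (c⁻¹ • μ)) (gibbsMeasure μ γ κ p g Z))
    (hgφ : Integrable g (gibbsMeasure μ γ κ p g Z)) :
    dualObjective Ξ (μ.withDensity fun x ↦ ENNReal.ofReal (p x)) (c⁻¹ • μ) γ κ g
        (gibbsMeasure μ γ κ p g Z)
      = ((-(1 + γ * κ) * log Z + γ * κ * log c.toReal : ℝ) : EReal) := by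
  have hμ : gibbsMeasure μ γ κ p g Z ≪ μ := gibbsMeasure_absolutelyContinuous
  rw [dualObjective_eq_coe h_compl
      ⟨hμ.trans (absolutelyContinuous_withDensity_ofReal hp hp_pos), h_prior⟩
      ⟨hμ.trans (Measure.absolutelyContinuous_smul (ENNReal.inv_ne_zero.2 hc_top)), h_unif⟩,
    (integral_llr_objective_eq hμ hγκ hp hp_pos hg hZ hc hc_top h_prior h_unif hgφ).2,
    integral_congr_ae (llr_self _), Pi.zero_def, integral_zero]
  congr 1
  ring

end Objective

section CompactSupport

open Real
open scoped ENNReal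

variable {E : Type*} [TopologicalSpace E] [MeasurableSpace E] [OpensMeasurableSpace E]
  [T2Space E] {K : Set E} {ν : Measure E}

lemma ContinuousOn.integrable_of_measure_compl_eq_zero {h : E → ℝ} {φ : Measure E}
    [IsFiniteMeasure φ] (hh : ContinuousOn h K) (hK : IsCompact K) (hφ : φ Kᶜ = 0) :
    Integrable h φ := by
  have h_int := hh.integrableOn_compact hK (μ := φ)
  rwa [IntegrableOn, Measure.restrict_eq_self_of_ae_mem (mem_ae_iff.2 hφ)] at h_int

lemma ContinuousOn.setIntegral_pos [IsFiniteMeasureOnCompacts ν] {f : E → ℝ}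
    (hf : ContinuousOn f K) (hK : IsCompact K) (hf_pos : ∀ x ∈ K, 0 < f x) (hνK : 0 < ν K) :
    0 < ∫ x in K, f x ∂ν := by
  refine (setIntegral_pos_iff_support_of_nonneg_ae ?_ (hf.integrableOn_compact hK)).2 ?_
  · exact ae_restrict_of_forall_mem hK.measurableSet fun x hx ↦ (hf_pos x hx).le
  · exact hνK.trans_le (measure_mono fun x hx ↦ ⟨(hf_pos x hx).ne', hx⟩)

lemma integrable_llr_withDensity_restrict [SigmaFinite ν] {f : E → ℝ}
    [IsFiniteMeasure ((ν.restrict K).withDensity fun x ↦ ENNReal.ofReal (f x))]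
    (hK : IsCompact K) (hf : ContinuousOn f K) (hf_pos : ∀ x ∈ K, 0 < f x) :
    Integrable (llr ((ν.restrict K).withDensity fun x ↦ ENNReal.ofReal (f x)) (ν.restrict K))
      ((ν.restrict K).withDensity fun x ↦ ENNReal.ofReal (f x)) := by
  have hKm := hK.measurableSet
  refine ((hf.log fun x hx ↦ (hf_pos x hx).ne').integrable_of_measure_compl_eq_zero hK
    (withDensity_absolutelyContinuous _ _ (mem_ae_iff.1 (ae_restrict_mem hKm)))).congr ?_
  refine (llr_withDensity_ofReal_left (hf.aemeasurable hKm) ?_).symm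
  exact ae_restrict_of_forall_mem hKm fun x hx ↦ (hf_pos x hx).le

lemma dualObjective_gibbsMeasure_restrict [SigmaFinite ν] {γ κ Z : ℝ} {c : ℝ≥0∞} {p g : E → ℝ}
    (hK : IsCompact K) (hγκ : 1 + γ * κ ≠ 0) (hp : ContinuousOn p K) (hp_pos : ∀ x ∈ K, 0 < p x)
    (hg : ContinuousOn g K) (hZ : 0 < Z) (hc : c ≠ 0) (hc_top : c ≠ ∞)
    [IsProbabilityMeasure (gibbsMeasure (ν.restrict K) γ κ p g Z)] :
    dualObjective K ((ν.restrict K).withDensity fun x ↦ ENNReal.ofReal (p x))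
        (c⁻¹ • ν.restrict K) γ κ g (gibbsMeasure (ν.restrict K) γ κ p g Z)
      = ((-(1 + γ * κ) * log Z + γ * κ * log c.toReal : ℝ) : EReal) := by
  have hKm := hK.measurableSet
  have hp_pos' : ∀ᵐ x ∂ν.restrict K, 0 < p x := ae_restrict_of_forall_mem hKm hp_pos
  have hμ : gibbsMeasure (ν.restrict K) γ κ p g Z ≪ ν.restrict K :=
    gibbsMeasure_absolutelyContinuous
  have h_compl : gibbsMeasure (ν.restrict K) γ κ p g Z Kᶜ = 0 :=
    hμ (mem_ae_iff.1 (ae_restrict_mem hKm))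
  have h_llr : Integrable (llr (gibbsMeasure (ν.restrict K) γ κ p g Z) (ν.restrict K))
      (gibbsMeasure (ν.restrict K) γ κ p g Z) :=
    integrable_llr_withDensity_restrict hK ((hp.gibbsDensity hp_pos hg).div_const Z)
      fun x hx ↦ div_pos (gibbsDensity_pos (hp_pos x hx)) hZ
  refine dualObjective_gibbsMeasure hγκ (hp.aemeasurable hKm) hp_pos' (hg.aemeasurable hKm) hZ
    hc hc_top h_compl ?_ ?_ (hg.integrable_of_measure_compl_eq_zero hK h_compl)
  · refine (h_llr.sub ((hp.log fun x hx ↦ (hp_pos x hx).ne').integrable_of_measure_compl_eq_zero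
      hK h_compl)).congr ?_
    exact (llr_withDensity_ofReal_right hμ (hp.aemeasurable hKm) hp_pos').symm
  · refine (h_llr.sub (integrable_const (log c⁻¹.toReal))).congr ?_
    exact (llr_smul_right hμ c⁻¹ (ENNReal.inv_ne_zero.2 hc_top) (ENNReal.inv_ne_top.2 hc)).symm

end CompactSupport

theorem stmt_19_general {d : ℕ} (Ξ : Set (EuclideanSpace ℝ (Fin d))) (hΞcomp : IsCompact Ξ)
    (hvol : 0 < volume Ξ)
    (g : EuclideanSpace ℝ (Fin d) → ℝ) (hg : ContinuousOn g Ξ)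
    (γ κ : ℝ) (hγ : 0 < γ) (hκ : 0 < κ)
    (p0 : EuclideanSpace ℝ (Fin d) → ℝ) (hp0cont : ContinuousOn p0 Ξ)
    (hp0pos : ∀ ξ ∈ Ξ, 0 < p0 ξ) :
    -- `φ₀` : the prior probability measure with density `p₀`
    let φ0 : Measure (EuclideanSpace ℝ (Fin d)) :=
      (volume.restrict Ξ).withDensity fun ξ => ENNReal.ofReal (p0 ξ)
    -- `φ_u` : the uniform probability measure on `Ξ`
    let φu : Measure (EuclideanSpace ℝ (Fin d)) := (volume Ξ)⁻¹ • volume.restrict Ξ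
    -- the normalizing constant
    let Z : ℝ := ∫ ξ in Ξ, p0 ξ ^ (1 / (1 + γ * κ)) * Real.exp (γ * g ξ / (1 + γ * κ))
    -- the minimizing probability measure `φ*`
    let φs : Measure (EuclideanSpace ℝ (Fin d)) :=
      (volume.restrict Ξ).withDensity fun ξ =>
        ENNReal.ofReal (p0 ξ ^ (1 / (1 + γ * κ)) * Real.exp (γ * g ξ / (1 + γ * κ)) / Z)
    -- the objective
    let F : Measure (EuclideanSpace ℝ (Fin d)) → EReal := fun φ =>
      KLdiv Ξ φ φ0 + ((γ * κ : ℝ) : EReal) * KLdiv Ξ φ φu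
        - (γ : EReal) * ((∫ ξ in Ξ, g ξ ∂φ : ℝ) : EReal)
    IsProbabilityMeasure φs ∧
    (∀ φ : Measure (EuclideanSpace ℝ (Fin d)), IsProbabilityMeasure φ → φ Ξᶜ = 0 →
      F φs ≤ F φ) ∧
    F φs = ((-(1 + γ * κ) * Real.log Z + γ * κ * Real.log (volume Ξ).toReal : ℝ) : EReal)
    := by
  intro φ0 φu Z φs F
  have hΞm : MeasurableSet Ξ := hΞcomp.measurableSet
  have hγκ : 0 < γ * κ := mul_pos hγ hκ
  have hq : ContinuousOn (gibbsDensity γ κ p0 g) Ξ := hp0cont.gibbsDensity hp0pos hg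
  have hq_pos : ∀ ξ ∈ Ξ, 0 < gibbsDensity γ κ p0 g ξ := fun ξ hξ ↦ gibbsDensity_pos (hp0pos ξ hξ)
  have hZ : 0 < Z := hq.setIntegral_pos hΞcomp hq_pos hvol
  have hφs : IsProbabilityMeasure (gibbsMeasure (volume.restrict Ξ) γ κ p0 g Z) :=
    isProbabilityMeasure_withDensity_div_integral (hq.integrableOn_compact hΞcomp)
      (ae_restrict_of_forall_mem hΞm fun ξ hξ ↦ (hq_pos ξ hξ).le) hZ.ne'
  have hF : F φs = ((-(1 + γ * κ) * Real.log Z + γ * κ * Real.log (volume Ξ).toReal : ℝ) : EReal) :=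
    dualObjective_gibbsMeasure_restrict hΞcomp (by linarith) hp0cont hp0pos hg hZ hvol.ne'
      hΞcomp.measure_lt_top.ne
  refine ⟨hφs, fun φ hφ hφΞ ↦ hF ▸ le_dualObjective hγκ (hp0cont.aemeasurable hΞm)
    (ae_restrict_of_forall_mem hΞm hp0pos) (hg.aemeasurable hΞm) hZ hvol.ne'
    hΞcomp.measure_lt_top.ne hφΞ (hg.integrable_of_measure_compl_eq_zero hΞcomp hφΞ), hF⟩

/-- The dual-update objective `φ ↦ D(φ,φ₀) + γκ D(φ,φ_u) − γ ∫_Ξ g dφ` over Borel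
probability measures on `Ξ` attains its minimum at the Gibbs-type measure `φ*` with
density `p₀^{1/(1+γκ)} e^{γg/(1+γκ)} / ∫_Ξ p₀^{1/(1+γκ)} e^{γg/(1+γκ)}`, and the
minimum value is `−(1+γκ) log ∫_Ξ p₀^{1/(1+γκ)} e^{γg/(1+γκ)} + γκ log(vol Ξ)`. -/
theorem stmt_19 {d : ℕ} (Ξ : Set (EuclideanSpace ℝ (Fin d))) (hΞcomp : IsCompact Ξ)
    (hvol : 0 < volume Ξ)
    (g : EuclideanSpace ℝ (Fin d) → ℝ) (hg : ContinuousOn g Ξ)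
    (γ κ : ℝ) (hγ : 0 < γ) (hκ : 0 < κ)
    (p0 : EuclideanSpace ℝ (Fin d) → ℝ) (hp0cont : ContinuousOn p0 Ξ)
    (hp0pos : ∀ ξ ∈ Ξ, 0 < p0 ξ)
    (hp0prob : IsProbabilityMeasure
      ((volume.restrict Ξ).withDensity fun ξ => ENNReal.ofReal (p0 ξ))) :
    -- `φ₀` : the prior probability measure with density `p₀`
    let φ0 : Measure (EuclideanSpace ℝ (Fin d)) :=
      (volume.restrict Ξ).withDensity fun ξ => ENNReal.ofReal (p0 ξ)
    -- `φ_u` : the uniform probability measure on `Ξ`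
    let φu : Measure (EuclideanSpace ℝ (Fin d)) := (volume Ξ)⁻¹ • volume.restrict Ξ
    -- the normalizing constant
    let Z : ℝ := ∫ ξ in Ξ, p0 ξ ^ (1 / (1 + γ * κ)) * Real.exp (γ * g ξ / (1 + γ * κ))
    -- the minimizing probability measure `φ*`
    let φs : Measure (EuclideanSpace ℝ (Fin d)) :=
      (volume.restrict Ξ).withDensity fun ξ =>
        ENNReal.ofReal (p0 ξ ^ (1 / (1 + γ * κ)) * Real.exp (γ * g ξ / (1 + γ * κ)) / Z)
    -- the objective
    let F : Measure (EuclideanSpace ℝ (Fin d)) → EReal := fun φ =>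
      KLdiv Ξ φ φ0 + ((γ * κ : ℝ) : EReal) * KLdiv Ξ φ φu
        - (γ : EReal) * ((∫ ξ in Ξ, g ξ ∂φ : ℝ) : EReal)
    IsProbabilityMeasure φs ∧
    (∀ φ : Measure (EuclideanSpace ℝ (Fin d)), IsProbabilityMeasure φ → φ Ξᶜ = 0 →
      F φs ≤ F φ) ∧
    F φs = ((-(1 + γ * κ) * Real.log Z + γ * κ * Real.log (volume Ξ).toReal : ℝ) : EReal) :=
  stmt_19_general Ξ hΞcomp hvol g hg γ κ hγ hκ p0 hp0cont hp0pos
end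
end
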